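/- arXiv:2002.10238 — 9 statements merged into one kernel-verified Lean document; each statement's English description precedes it below -/
import Mathlib

section
/- Let $(A,\cdot,\ast)$ be an F-manifold-admissible algebra, i.e., $(A,\cdot)$ is commutative associative, $(A,\ast)$ is Lie-admissible, and $x\ast(y\cdot z) - (x\ast y)\cdot z - y\cdot(x\ast z) = y\ast(x\cdot z) - (y\ast x)\cdot z - x\cdot(y\ast z)$ for all $x,y,z$. Then $(A,\cdot,[-,-])$ with $[x,y] = x\ast y - y\ast x$ is an F-manifold algebra. -/
namespace FMan
variable {A : Type*} [AddCommGroup A]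

/-- The Hertling-Manin operator `P_x(y,z) = [x, y·z] - [x,y]·z - y·[x,z]`. -/
def P (mul br : A → A → A) (x y z : A) : A :=
  br x (mul y z) - mul (br x y) z - mul y (br x z)

/-- `(A, mul, br)` is an F-manifold algebra: `mul` is commutative associative,
`br` is a Lie bracket, and the Hertling-Manin relation holds. -/
def IsFManifold (mul br : A → A → A) : Prop :=
  (∀ x y, mul x y = mul y x) ∧
  (∀ x y z, mul (mul x y) z = mul x (mul y z)) ∧
  (∀ x y, br x y = - br y x) ∧
  (∀ x y z, br x (br y z) + br y (br z x) + br z (br x y) = 0) ∧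
  (∀ x y z w, P mul br (mul x y) z w =
      mul x (P mul br y z w) + mul y (P mul br x z w))

/-- `F₁(x,y,z) = x∗(y⋄z) - y⋄(x∗z) - [x,y]⋄z`. -/
def F1 (d s : A → A → A) (x y z : A) : A :=
  s x (d y z) - d y (s x z) - d (s x y - s y x) z

/-- `F₂(x,y,z) = x⋄(y∗z) + y⋄(x∗z) - (x·y)∗z`. -/
def F2 (d s : A → A → A) (x y z : A) : A :=
  d x (s y z) + d y (s x z) - s (d x y + d y x) z

/-- `(A, ⋄, ∗)` is a pre-F-manifold algebra: `⋄` Zinbiel, `∗` pre-Lie, plus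
the two compatibility conditions. -/
def IsPreFManifold (d s : A → A → A) : Prop :=
  (∀ x y z, d x (d y z) = d (d y x) z + d (d x y) z) ∧
  (∀ x y z, s (s x y) z - s x (s y z) = s (s y x) z - s y (s x z)) ∧
  (∀ x y z w, F1 d s (d x y + d y x) z w = d x (F1 d s y z w) + d y (F1 d s x z w)) ∧
  (∀ x y z w, d (F1 d s x y z + F1 d s x z y + F2 d s y z x) w =
      F2 d s y z (d x w) - d x (F2 d s y z w))

/-- `G₁(x,y,z) = {x, y•z} - {x,y}•z - y•{x,z}`. -/
def G1 (bl lb : A → A → A) (x y z : A) : A :=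
  lb x (bl y z) - bl (lb x y) z - bl y (lb x z)

/-- `G₂(x,y,z) = {y•z, x} - z•{y,x} - y•{z,x}`. -/
def G2 (bl lb : A → A → A) (x y z : A) : A :=
  lb (bl y z) x - bl z (lb y x) - bl y (lb z x)

/-- `(A, •, {-,-})` is a dual pre-F-manifold algebra: `•` permutative,
`{-,-}` Leibniz, plus three compatibility conditions. -/
def IsDualPreFManifold (bl lb : A → A → A) : Prop :=
  (∀ x y z, bl x (bl y z) = bl (bl x y) z) ∧
  (∀ x y z, bl (bl x y) z = bl (bl y x) z) ∧
  (∀ x y z, lb x (lb y z) = lb (lb x y) z + lb y (lb x z)) ∧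
  (∀ x y z w, G1 bl lb (bl x y) z w = bl x (G1 bl lb y z w) + bl y (G1 bl lb x z w)) ∧
  (∀ x y z w, G2 bl lb (bl y x) z w = bl y (G2 bl lb x z w) - bl (G1 bl lb y z w) x) ∧
  (∀ x y z, bl (lb x y) z + bl (lb y x) z = 0)

end FMan

open FMan

/-!
Write `δf(u, v) = f(u·v) - f(u)·v - u·f(v)` and `L_a = a ∗ -`, `R_a = - ∗ a`. The Hertling–Manin
operator of the commutator bracket is `P_a = δL_a - δR_a`. Admissibility says `δL_a(b, c)` is
symmetric in `a, b`, so it is totally symmetric. Expanding, the Hertling–Manin defect of `δR` at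
`(x, y; z, w)` equals that of `δL` at `(z, w; x, y)`; and the cocycle identity for the Hochschild
coboundary `δL_z`, together with total symmetry, shows that the defect of `δL` is invariant under
`(x, y; z, w) ↦ (z, w; x, y)`. Hence the two defects cancel.
-/

namespace FManifoldAdmissible

variable {R A : Type*} [CommSemiring R] [AddCommGroup A] [Module R A]
  (m s : A →ₗ[R] A →ₗ[R] A)

def derivDefect (f : A → A) (u v : A) : A :=
  f (m u v) - m (f u) v - m u (f v)

def leftDerivDefect (a u v : A) : A :=
  derivDefect m (s a) u v

def rightDerivDefect (a u v : A) : A :=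
  derivDefect m (fun x => s x a) u v

def hertlingManinDefect (T : A → A → A → A) (x y z w : A) : A :=
  T (m x y) z w - m x (T y z w) - m y (T x z w)

variable {m s}

theorem derivDefect_cocycle (hassoc : ∀ x y z : A, m (m x y) z = m x (m y z))
    (f : A → A) (x y w : A) :
    derivDefect m f (m x y) w + m (derivDefect m f x y) w =
      derivDefect m f x (m y w) + m x (derivDefect m f y w) := by
  simp only [derivDefect, map_sub, LinearMap.sub_apply, hassoc]
  abel

theorem hertlingManinDefect_P_commutator (x y z w : A) :
    hertlingManinDefect m (P (fun x y => m x y) (fun x y => s x y - s y x)) x y z w =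
      hertlingManinDefect m (leftDerivDefect m s) x y z w -
        hertlingManinDefect m (rightDerivDefect m s) x y z w := by
  simp only [hertlingManinDefect, P, leftDerivDefect, rightDerivDefect, derivDefect, map_sub,
    LinearMap.sub_apply]
  abel

theorem hertlingManinDefect_rightDerivDefect (hcomm : ∀ x y : A, m x y = m y x)
    (hassoc : ∀ x y z : A, m (m x y) z = m x (m y z)) (x y z w : A) :
    hertlingManinDefect m (rightDerivDefect m s) x y z w =
      hertlingManinDefect m (leftDerivDefect m s) z w x y := by
  have hlc : ∀ a b c : A, m a (m b c) = m b (m a c) := fun a b c => by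
    rw [← hassoc, hcomm a b, hassoc]
  simp only [hertlingManinDefect, rightDerivDefect, leftDerivDefect, derivDefect, map_sub]
  simp only [hcomm, hlc]
  abel

theorem hertlingManinDefect_leftDerivDefect (hassoc : ∀ x y z : A, m (m x y) z = m x (m y z))
    (hsymm : ∀ x y z : A, leftDerivDefect m s x y z = leftDerivDefect m s y x z) (x y z w : A) :
    hertlingManinDefect m (leftDerivDefect m s) x y z w =
      leftDerivDefect m s z x (m y w) - m (leftDerivDefect m s z x y) w -
        m y (leftDerivDefect m s z x w) := by
  have hcocycle := derivDefect_cocycle hassoc (s z) x y w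
  rw [hertlingManinDefect, hsymm (m x y) z, hsymm y z, hsymm x z]
  simp only [leftDerivDefect]
  linear_combination (norm := abel) hcocycle

theorem hertlingManinDefect_leftDerivDefect_symm (hcomm : ∀ x y : A, m x y = m y x)
    (hassoc : ∀ x y z : A, m (m x y) z = m x (m y z))
    (hsymm : ∀ x y z : A, leftDerivDefect m s x y z = leftDerivDefect m s y x z) (x y z w : A) :
    hertlingManinDefect m (leftDerivDefect m s) x y z w =
      hertlingManinDefect m (leftDerivDefect m s) z w x y := by
  rw [hertlingManinDefect_leftDerivDefect hassoc hsymm,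
    hertlingManinDefect_leftDerivDefect hassoc hsymm]
  simp only [hsymm x z, hcomm w y]
  rw [hcomm (leftDerivDefect m s z x y) w, hcomm (leftDerivDefect m s z x w) y]
  abel

theorem jacobi_commutator
    (hLieAdm : ∀ x y z : A,
      (s (s x y) z - s x (s y z)) - (s (s y x) z - s y (s x z))
      + (s (s y z) x - s y (s z x)) - (s (s z y) x - s z (s y x))
      + (s (s z x) y - s z (s x y)) - (s (s x z) y - s x (s z y)) = 0)
    (x y z : A) :
    (s x (s y z - s z y) - s (s y z - s z y) x) + (s y (s z x - s x z) - s (s z x - s x z) y)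
      + (s z (s x y - s y x) - s (s x y - s y x) z) = 0 := by
  simp only [map_sub, LinearMap.sub_apply]
  linear_combination (norm := abel) -hLieAdm x y z

end FManifoldAdmissible

open FManifoldAdmissible

theorem FManifoldAdmissible_to_FManifold_general
    {K A : Type*} [Field K] [AddCommGroup A] [Module K A]
    (m s : A →ₗ[K] A →ₗ[K] A)
    (hcomm : ∀ x y : A, m x y = m y x)
    (hassoc : ∀ x y z : A, m (m x y) z = m x (m y z))
    (hLieAdm : ∀ x y z : A,
      (s (s x y) z - s x (s y z)) - (s (s y x) z - s y (s x z))
      + (s (s y z) x - s y (s z x)) - (s (s z y) x - s z (s y x))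
      + (s (s z x) y - s z (s x y)) - (s (s x z) y - s x (s z y)) = 0)
    (hadm : ∀ x y z : A,
      s x (m y z) - m (s x y) z - m y (s x z) =
      s y (m x z) - m (s y x) z - m x (s y z)) :
    IsFManifold (fun x y => m x y) (fun x y => s x y - s y x) := by
  refine ⟨hcomm, hassoc, fun x y => (neg_sub _ _).symm, jacobi_commutator hLieAdm,
    fun x y z w => ?_⟩
  have hHM := hertlingManinDefect_P_commutator (m := m) (s := s) x y z w
  rw [hertlingManinDefect_rightDerivDefect hcomm hassoc,
    hertlingManinDefect_leftDerivDefect_symm hcomm hassoc hadm, sub_self] at hHM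
  rw [← sub_eq_zero, ← sub_sub]
  exact hHM

/-- An F-manifold-admissible algebra gives an F-manifold algebra via the commutator bracket. -/
theorem FManifoldAdmissible_to_FManifold
    {K A : Type*} [Field K] [CharZero K] [AddCommGroup A] [Module K A]
    (m s : A →ₗ[K] A →ₗ[K] A)
    (hcomm : ∀ x y : A, m x y = m y x)
    (hassoc : ∀ x y z : A, m (m x y) z = m x (m y z))
    (hLieAdm : ∀ x y z : A,
      (s (s x y) z - s x (s y z)) - (s (s y x) z - s y (s x z))
      + (s (s y z) x - s y (s z x)) - (s (s z y) x - s z (s y x))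
      + (s (s z x) y - s z (s x y)) - (s (s x z) y - s x (s z y)) = 0)
    (hadm : ∀ x y z : A,
      s x (m y z) - m (s x y) z - m y (s x z) =
      s y (m x z) - m (s y x) z - m x (s y z)) :
    IsFManifold (fun x y => m x y) (fun x y => s x y - s y x) :=
  FManifoldAdmissible_to_FManifold_general m s hcomm hassoc hLieAdm hadm
end

section
/- Let $(A,\cdot,\ast)$ be a PreLie-Com algebra. Then $(A,\cdot,[-,-])$ is an F-manifold algebra, where $[x,y] = x\ast y - y\ast x$. -/
/-! Since `x ∗ -` is a derivation of `·`, the Hertling-Manin operator of the commutator bracket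
only sees right translations: `P_x(y,z) = y·(z∗x) + (y∗x)·z - (y·z)∗x`. The derivation rule
`u∗(x·w) = (u∗x)·w + x·(u∗w)` then splits `P_{x·w}` into `w·P_x + x·P_w`. -/

namespace FMan

variable {R A : Type*} [CommSemiring R] [AddCommGroup A] [Module R A]

def commutator (s : A →ₗ[R] A →ₗ[R] A) (x y : A) : A :=
  s x y - s y x

theorem commutator_antisymm (s : A →ₗ[R] A →ₗ[R] A) (x y : A) :
    commutator s x y = -commutator s y x := by
  simp only [commutator, neg_sub]

theorem commutator_jacobi (s : A →ₗ[R] A →ₗ[R] A)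
    (hpre : ∀ x y z, s (s x y) z - s x (s y z) = s (s y x) z - s y (s x z)) (x y z : A) :
    commutator s x (commutator s y z) + commutator s y (commutator s z x) +
      commutator s z (commutator s x y) = 0 := by
  simp only [commutator, map_sub, LinearMap.sub_apply]
  linear_combination (norm := abel1) -hpre x y z - hpre y z x - hpre z x y

section Derivation

variable (m s : A →ₗ[R] A →ₗ[R] A)
  (hcomm : ∀ x y, m x y = m y x) (hassoc : ∀ x y z, m (m x y) z = m x (m y z))
  (hder : ∀ x y z, s x (m y z) = m (s x y) z + m y (s x z))
include hder

theorem P_commutator_eq (x y z : A) :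
    P (fun x y => m x y) (commutator s) x y z = m y (s z x) + m (s y x) z - s (m y z) x := by
  simp only [P, commutator, hder, map_sub, LinearMap.sub_apply]
  abel

include hcomm hassoc

theorem P_commutator_mul_left (x w y z : A) :
    P (fun x y => m x y) (commutator s) (m x w) y z =
      m x (P (fun x y => m x y) (commutator s) w y z) +
        m w (P (fun x y => m x y) (commutator s) x y z) := by
  have hlcomm : ∀ x y z, m x (m y z) = m y (m x z) := fun x y z => by
    rw [← hassoc, hcomm x y, hassoc]
  simp only [P_commutator_eq m s hder, hder, map_sub, map_add, LinearMap.add_apply]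
  simp only [hassoc, hlcomm, hcomm]
  abel

end Derivation

end FMan

open FMan

theorem preLieCom_to_FManifold_general
    {K A : Type*} [Field K] [AddCommGroup A] [Module K A]
    (m s : A →ₗ[K] A →ₗ[K] A)
    (hcomm : ∀ x y : A, m x y = m y x)
    (hassoc : ∀ x y z : A, m (m x y) z = m x (m y z))
    (hpre : ∀ x y z : A, s (s x y) z - s x (s y z) = s (s y x) z - s y (s x z))
    (hcompat : ∀ x y z : A, s x (m y z) - m (s x y) z - m y (s x z) = 0) :
    IsFManifold (fun x y => m x y) (fun x y => s x y - s y x) := by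
  have hder : ∀ x y z, s x (m y z) = m (s x y) z + m y (s x z) := fun x y z =>
    sub_eq_zero.mp ((sub_sub _ _ _).symm.trans (hcompat x y z))
  exact ⟨hcomm, hassoc, commutator_antisymm s, commutator_jacobi s hpre,
    P_commutator_mul_left m s hcomm hassoc hder⟩

/-- A PreLie-Com algebra gives an F-manifold algebra via the commutator bracket. -/
theorem preLieCom_to_FManifold
    {K A : Type*} [Field K] [CharZero K] [AddCommGroup A] [Module K A]
    (m s : A →ₗ[K] A →ₗ[K] A)
    (hcomm : ∀ x y : A, m x y = m y x)
    (hassoc : ∀ x y z : A, m (m x y) z = m x (m y z))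
    (hpre : ∀ x y z : A, s (s x y) z - s x (s y z) = s (s y x) z - s y (s x z))
    (hcompat : ∀ x y z : A, s x (m y z) - m (s x y) z - m y (s x z) = 0) :
    IsFManifold (fun x y => m x y) (fun x y => s x y - s y x) :=
  preLieCom_to_FManifold_general m s hcomm hassoc hpre hcompat
end

section
/- Let $(A,\cdot)$ be a commutative associative algebra with a derivation $D$, and fix $a$ in the base field (or $a\in A$). Then the product $x\ast_a y = x\cdot D(y) + a\cdot x\cdot y$ makes $(A,\cdot,\ast_a)$ into an F-manifold-admissible algebra; consequently $(A,\cdot,[-,-])$ with $[x,y] = x\cdot D(y) - y\cdot D(x)$ is an F-manifold algebra. -/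
open FMan

namespace FMan

section LieAdmissible

variable {A : Type*} [AddCommGroup A]

def opAssociator (s : A → A → A) (x y z : A) : A :=
  s (s x y) z - s x (s y z)

def IsLeftSymmetric (s : A → A → A) : Prop :=
  ∀ x y z, opAssociator s x y z = opAssociator s y x z

def IsLieAdmissible (s : A → A → A) : Prop :=
  ∀ x y z, opAssociator s x y z - opAssociator s y x z + opAssociator s y z x
    - opAssociator s z y x + opAssociator s z x y - opAssociator s x z y = 0

theorem IsLeftSymmetric.isLieAdmissible {s : A → A → A} (h : IsLeftSymmetric s) :
    IsLieAdmissible s := by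
  intro x y z
  rw [h x y z, h y z x, h z x y]
  abel

theorem IsLieAdmissible.jacobi_commutator {R : Type*} [CommSemiring R] [Module R A]
    {s : A →ₗ[R] A →ₗ[R] A} (h : IsLieAdmissible (fun x y => s x y)) (x y z : A) :
    let c : A → A → A := fun x y => s x y - s y x
    c x (c y z) + c y (c z x) + c z (c x y) = 0 := by
  have hxyz := h x y z
  simp only [opAssociator] at hxyz
  simp only [map_sub, LinearMap.sub_apply]
  rw [← neg_eq_zero, ← hxyz]
  abel

end LieAdmissible

section Derivation

variable {R A : Type*} [CommRing R] [AddCommGroup A] [Module R A]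
  (m : A →ₗ[R] A →ₗ[R] A) (D : A →ₗ[R] A) (a : R)

def derivStar : A →ₗ[R] A →ₗ[R] A :=
  m.compl₂ D + a • m

def derivBracket (x y : A) : A :=
  m x (D y) - m y (D x)

@[simp]
theorem derivStar_apply (x y : A) : derivStar m D a x y = m x (D y) + a • m x y := rfl

variable {m D}

theorem left_comm_of_comm_of_assoc (hcomm : ∀ x y, m x y = m y x)
    (hassoc : ∀ x y z, m (m x y) z = m x (m y z)) (x y z : A) :
    m x (m y z) = m y (m x z) := by
  rw [← hassoc, hcomm x y, hassoc]

theorem opAssociator_derivStar (hassoc : ∀ x y z, m (m x y) z = m x (m y z))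
    (hder : ∀ x y, D (m x y) = m (D x) y + m x (D y)) (x y z : A) :
    opAssociator (fun x y => derivStar m D a x y) x y z = -m (m x y) (D (D z) + a • D z) := by
  simp only [opAssociator, derivStar_apply, map_add, map_smul, LinearMap.add_apply,
    LinearMap.smul_apply, hder, hassoc]
  module

theorem derivStar_isLeftSymmetric (hcomm : ∀ x y, m x y = m y x)
    (hassoc : ∀ x y z, m (m x y) z = m x (m y z))
    (hder : ∀ x y, D (m x y) = m (D x) y + m x (D y)) :
    IsLeftSymmetric (fun x y => derivStar m D a x y) := by
  intro x y z
  rw [opAssociator_derivStar a hassoc hder, opAssociator_derivStar a hassoc hder, hcomm x y]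

theorem derivStar_leibniz_defect (hcomm : ∀ x y, m x y = m y x)
    (hassoc : ∀ x y z, m (m x y) z = m x (m y z))
    (hder : ∀ x y, D (m x y) = m (D x) y + m x (D y)) (x y z : A) :
    derivStar m D a x (m y z) - m (derivStar m D a x y) z - m y (derivStar m D a x z) =
      -(a • m (m x y) z) := by
  simp only [derivStar_apply, map_add, map_smul, LinearMap.add_apply, LinearMap.smul_apply,
    hder, hassoc]
  rw [left_comm_of_comm_of_assoc hcomm hassoc x y (D z),
    left_comm_of_comm_of_assoc hcomm hassoc y x z]
  module

theorem derivStar_sub_swap (hcomm : ∀ x y, m x y = m y x) (x y : A) :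
    derivStar m D a x y - derivStar m D a y x = derivBracket m D x y := by
  rw [derivStar_apply, derivStar_apply, derivBracket, hcomm y x]
  abel

theorem P_derivBracket (hcomm : ∀ x y, m x y = m y x)
    (hassoc : ∀ x y z, m (m x y) z = m x (m y z))
    (hder : ∀ x y, D (m x y) = m (D x) y + m x (D y)) (x y z : A) :
    P (fun x y => m x y) (derivBracket m D) x y z = m (m y z) (D x) := by
  simp only [P, derivBracket, hder, map_add, map_sub, LinearMap.sub_apply, hassoc]
  rw [left_comm_of_comm_of_assoc hcomm hassoc x y (D z), hcomm (D x) z]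
  abel

theorem isFManifold_derivBracket (hcomm : ∀ x y, m x y = m y x)
    (hassoc : ∀ x y z, m (m x y) z = m x (m y z))
    (hder : ∀ x y, D (m x y) = m (D x) y + m x (D y)) :
    IsFManifold (fun x y => m x y) (derivBracket m D) := by
  refine ⟨hcomm, hassoc, fun x y => (neg_sub _ _).symm, fun x y z => ?_, fun x y z w => ?_⟩
  · -- The bracket is the commutator of `∗ₐ` for every `a`; take `a = 0`.
    have hjac :=
      (derivStar_isLeftSymmetric 0 hcomm hassoc hder).isLieAdmissible.jacobi_commutator x y z
    simpa only [derivStar_sub_swap 0 hcomm] using hjac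
  · simp only [P_derivBracket hcomm hassoc hder, hder, map_add]
    rw [add_comm, hcomm (D x) y, left_comm_of_comm_of_assoc hcomm hassoc (m z w),
      left_comm_of_comm_of_assoc hcomm hassoc (m z w)]

end Derivation

end FMan

theorem derivation_gives_FManifoldAdmissible_and_FManifold_general
    {K A : Type*} [Field K] [AddCommGroup A] [Module K A]
    (m : A →ₗ[K] A →ₗ[K] A) (D : A →ₗ[K] A) (a : K)
    (hcomm : ∀ x y : A, m x y = m y x)
    (hassoc : ∀ x y z : A, m (m x y) z = m x (m y z))
    (hder : ∀ x y : A, D (m x y) = m (D x) y + m x (D y)) :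
    (∀ x y z : A,
      (let s : A → A → A := fun x y => m x (D y) + a • m x y
       (s (s x y) z - s x (s y z)) - (s (s y x) z - s y (s x z))
       + (s (s y z) x - s y (s z x)) - (s (s z y) x - s z (s y x))
       + (s (s z x) y - s z (s x y)) - (s (s x z) y - s x (s z y))) = 0) ∧
    (∀ x y z : A,
      (let s : A → A → A := fun x y => m x (D y) + a • m x y
       s x (m y z) - m (s x y) z - m y (s x z)) =
      (let s : A → A → A := fun x y => m x (D y) + a • m x y
       s y (m x z) - m (s y x) z - m x (s y z))) ∧
    IsFManifold (fun x y => m x y) (fun x y => m x (D y) - m y (D x)) := by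
  refine ⟨fun x y z => ?_, fun x y z => ?_, isFManifold_derivBracket hcomm hassoc hder⟩
  · simpa only [IsLieAdmissible, opAssociator, derivStar_apply] using
      (derivStar_isLeftSymmetric a hcomm hassoc hder).isLieAdmissible x y z
  · have hdefect := derivStar_leibniz_defect a hcomm hassoc hder
    simp only [derivStar_apply] at hdefect
    dsimp only
    rw [hdefect x y z, hdefect y x z, hcomm x y]

/-- A commutative associative algebra with a derivation `D` and a scalar `a` gives an
F-manifold-admissible algebra via `x ∗ₐ y = x·D(y) + a x·y`, and hence an F-manifold
algebra with bracket `[x,y] = x·D(y) - y·D(x)`. -/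
theorem derivation_gives_FManifoldAdmissible_and_FManifold
    {K A : Type*} [Field K] [CharZero K] [AddCommGroup A] [Module K A]
    (m : A →ₗ[K] A →ₗ[K] A) (D : A →ₗ[K] A) (a : K)
    (hcomm : ∀ x y : A, m x y = m y x)
    (hassoc : ∀ x y z : A, m (m x y) z = m x (m y z))
    (hder : ∀ x y : A, D (m x y) = m (D x) y + m x (D y)) :
    (∀ x y z : A,
      (let s : A → A → A := fun x y => m x (D y) + a • m x y
       (s (s x y) z - s x (s y z)) - (s (s y x) z - s y (s x z))
       + (s (s y z) x - s y (s z x)) - (s (s z y) x - s z (s y x))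
       + (s (s z x) y - s z (s x y)) - (s (s x z) y - s x (s z y))) = 0) ∧
    (∀ x y z : A,
      (let s : A → A → A := fun x y => m x (D y) + a • m x y
       s x (m y z) - m (s x y) z - m y (s x z)) =
      (let s : A → A → A := fun x y => m x (D y) + a • m x y
       s y (m x z) - m (s y x) z - m x (s y z))) ∧
    IsFManifold (fun x y => m x y) (fun x y => m x (D y) - m y (D x)) :=
  derivation_gives_FManifoldAdmissible_and_FManifold_general m D a hcomm hassoc hder
end

section
/- Let $(A,\diamond,\ast)$ be a pre-F-manifold algebra. Then $(A,\cdot,[-,-])$ with $x\cdot y = x\diamond y + y\diamond x$ and $[x,y] = x\ast y - y\ast x$ is an F-manifold algebra. -/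
open FMan

/-!
The symmetrized Zinbiel product is commutative and associative, and the commutator of a pre-Lie
product is a Lie bracket. The key identity is `P_x(y,z) = F₁(x,y,z) + F₁(x,z,y) + F₂(y,z,x)`, by
which the second compatibility condition reads `F₂(z,w,x⋄y) = x⋄F₂(z,w,y) + P_x(z,w)⋄y`.
Expanding `P_{x·y}(z,w)` through the key identity, the first condition handles the two `F₁` terms
and the second one (for `x⋄y` and `y⋄x`) the `F₂` term, leaving
`x⋄P_y + y⋄P_x + P_x⋄y + P_y⋄x = x·P_y(z,w) + y·P_x(z,w)`.
-/

namespace FMan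

variable {A : Type*} [AddCommGroup A] (d s : A →+ A →+ A)

local notation "F₁" => F1 (fun x y => d x y) (fun x y => s x y)
local notation "F₂" => F2 (fun x y => d x y) (fun x y => s x y)
local notation "Pₛ" => P (fun x y => d x y + d y x) (fun x y => s x y - s y x)

theorem symm_assoc_of_zinbiel (hd : ∀ x y z, d x (d y z) = d (d y x) z + d (d x y) z)
    (x y z : A) :
    d (d x y + d y x) z + d z (d x y + d y x) = d x (d y z + d z y) + d (d y z + d z y) x := by
  simp only [map_add, AddMonoidHom.add_apply]
  linear_combination (norm := abel) hd z x y + hd z y x - hd x y z - hd x z y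

theorem jacobi_commutator_of_preLie
    (hs : ∀ x y z, s (s x y) z - s x (s y z) = s (s y x) z - s y (s x z)) (x y z : A) :
    s x (s y z - s z y) - s (s y z - s z y) x + (s y (s z x - s x z) - s (s z x - s x z) y)
      + (s z (s x y - s y x) - s (s x y - s y x) z) = 0 := by
  simp only [map_sub, AddMonoidHom.sub_apply]
  linear_combination (norm := abel) -hs x y z - hs y z x - hs z x y

theorem P_eq_F1_add_F1_add_F2 (x y z : A) : Pₛ x y z = F₁ x y z + F₁ x z y + F₂ y z x := by
  simp only [P, F1, F2, map_add, map_sub, AddMonoidHom.add_apply, AddMonoidHom.sub_apply]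
  abel

theorem F2_add (x y z w : A) : F₂ x y (z + w) = F₂ x y z + F₂ x y w := by
  simp only [F2, map_add]
  abel

theorem F2_zinbiel_of_isPreFManifold (h : IsPreFManifold (fun x y => d x y) (fun x y => s x y))
    (x y z w : A) : F₂ z w (d x y) = d x (F₂ z w y) + d (Pₛ x z w) y := by
  rw [P_eq_F1_add_F1_add_F2]
  linear_combination (norm := abel) -h.2.2.2 x z w y

theorem hertlingManin_of_isPreFManifold (h : IsPreFManifold (fun x y => d x y) (fun x y => s x y))
    (x y z w : A) :
    Pₛ (d x y + d y x) z w = d x (Pₛ y z w) + d (Pₛ y z w) x + (d y (Pₛ x z w) + d (Pₛ x z w) y) := by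
  rw [P_eq_F1_add_F1_add_F2, h.2.2.1, h.2.2.1, F2_add, F2_zinbiel_of_isPreFManifold d s h,
    F2_zinbiel_of_isPreFManifold d s h, P_eq_F1_add_F1_add_F2, P_eq_F1_add_F1_add_F2]
  simp only [map_add, AddMonoidHom.add_apply]
  abel

end FMan

theorem preFManifold_to_FManifold_general
    {K A : Type*} [Field K] [AddCommGroup A] [Module K A]
    (d s : A →ₗ[K] A →ₗ[K] A)
    (h : IsPreFManifold (fun x y => d x y) (fun x y => s x y)) :
    IsFManifold (fun x y => d x y + d y x) (fun x y => s x y - s y x) := by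
  let d' : A →+ A →+ A := LinearMap.toAddMonoidHom'.comp d.toAddMonoidHom
  let s' : A →+ A →+ A := LinearMap.toAddMonoidHom'.comp s.toAddMonoidHom
  exact ⟨fun x y => add_comm _ _, symm_assoc_of_zinbiel d' h.1,
    fun x y => (neg_sub _ _).symm, jacobi_commutator_of_preLie s' h.2.1,
    hertlingManin_of_isPreFManifold d' s' h⟩

/-- The sub-adjacent structure of a pre-F-manifold algebra is an F-manifold algebra. -/
theorem preFManifold_to_FManifold
    {K A : Type*} [Field K] [CharZero K] [AddCommGroup A] [Module K A]
    (d s : A →ₗ[K] A →ₗ[K] A)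
    (h : IsPreFManifold (fun x y => d x y) (fun x y => s x y)) :
    IsFManifold (fun x y => d x y + d y x) (fun x y => s x y - s y x) :=
  preFManifold_to_FManifold_general d s h
end

section
/- Let $(A,\cdot_A,[-,-]_A)$ be an F-manifold algebra and $(V;\rho,\mu)$ a representation of $A$. Then the semidirect product $A\oplus V$, with product $(x_1+v_1)\cdot(x_2+v_2) = x_1\cdot_A x_2 + \mu(x_1)v_2 + \mu(x_2)v_1$ and bracket $[x_1+v_1, x_2+v_2] = [x_1,x_2]_A + \rho(x_1)v_2 - \rho(x_2)v_1$, is an F-manifold algebra. -/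
namespace FMan

variable {R A V : Type*} [CommSemiring R] [AddCommGroup A] [Module R A]
  [AddCommGroup V] [Module R V]
  (mA brA : A →ₗ[R] A →ₗ[R] A) (ρ μ : A →ₗ[R] V →ₗ[R] V)

def semidirectMul (p q : A × V) : A × V :=
  (mA p.1 q.1, μ p.1 q.2 + μ q.1 p.2)

def semidirectBracket (p q : A × V) : A × V :=
  (brA p.1 q.1, ρ p.1 q.2 - ρ q.1 p.2)

def repR (x y : A) : V →ₗ[R] V :=
  ρ x ∘ₗ μ y - μ y ∘ₗ ρ x - μ (brA x y)

def repS (x y : A) : V →ₗ[R] V :=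
  μ x ∘ₗ ρ y + μ y ∘ₗ ρ x - ρ (mA x y)

theorem semidirectMul_comm (hc : ∀ x y, mA x y = mA y x) (p q : A × V) :
    semidirectMul mA μ p q = semidirectMul mA μ q p :=
  Prod.ext (hc p.1 q.1) (add_comm _ _)

theorem semidirectMul_assoc (hc : ∀ x y, mA x y = mA y x)
    (ha : ∀ x y z, mA (mA x y) z = mA x (mA y z))
    (hμ : ∀ x y v, μ (mA x y) v = μ x (μ y v)) (p q r : A × V) :
    semidirectMul mA μ (semidirectMul mA μ p q) r =
      semidirectMul mA μ p (semidirectMul mA μ q r) := by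
  refine Prod.ext (ha p.1 q.1 r.1) ?_
  have hμ_comm : ∀ x y v, μ x (μ y v) = μ y (μ x v) := fun x y v => by
    rw [← hμ, hc, hμ]
  simp only [semidirectMul, map_add, hμ, hμ_comm r.1]
  abel

theorem semidirectBracket_antisymm (hanti : ∀ x y, brA x y = -brA y x) (p q : A × V) :
    semidirectBracket brA ρ p q = -semidirectBracket brA ρ q p :=
  Prod.ext (hanti p.1 q.1) (neg_sub _ _).symm

theorem semidirectBracket_jacobi
    (hjac : ∀ x y z, brA x (brA y z) + brA y (brA z x) + brA z (brA x y) = 0)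
    (hρ : ∀ x y v, ρ (brA x y) v = ρ x (ρ y v) - ρ y (ρ x v)) (p q r : A × V) :
    semidirectBracket brA ρ p (semidirectBracket brA ρ q r) +
        semidirectBracket brA ρ q (semidirectBracket brA ρ r p) +
        semidirectBracket brA ρ r (semidirectBracket brA ρ p q) = 0 := by
  refine Prod.ext (hjac p.1 q.1 r.1) ?_
  simp only [semidirectBracket, Prod.snd_add, Prod.snd_zero, map_sub, hρ]
  abel

theorem P_semidirect (p q r : A × V) :
    P (semidirectMul mA μ) (semidirectBracket brA ρ) p q r =
      (P (mA · ·) (brA · ·) p.1 q.1 r.1,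
        repR brA ρ μ p.1 q.1 r.2 + repR brA ρ μ p.1 r.1 q.2 + repS mA ρ μ q.1 r.1 p.2) := by
  refine Prod.ext rfl ?_
  simp only [P, semidirectMul, semidirectBracket, repR, repS, Prod.snd_sub, map_add, map_sub,
    LinearMap.add_apply, LinearMap.sub_apply, LinearMap.comp_apply]
  abel

theorem semidirect_hertlingManin
    (hHM : ∀ x y z w, P (mA · ·) (brA · ·) (mA x y) z w =
      mA x (P (mA · ·) (brA · ·) y z w) + mA y (P (mA · ·) (brA · ·) x z w))
    (hR : ∀ x y z v, repR brA ρ μ (mA x y) z v =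
      μ x (repR brA ρ μ y z v) + μ y (repR brA ρ μ x z v))
    (hS : ∀ x y z v, μ (P (mA · ·) (brA · ·) x y z) v =
      repS mA ρ μ y z (μ x v) - μ x (repS mA ρ μ y z v))
    (p q r s : A × V) :
    P (semidirectMul mA μ) (semidirectBracket brA ρ) (semidirectMul mA μ p q) r s =
      semidirectMul mA μ p (P (semidirectMul mA μ) (semidirectBracket brA ρ) q r s) +
        semidirectMul mA μ q (P (semidirectMul mA μ) (semidirectBracket brA ρ) p r s) := by
  simp only [P_semidirect]
  refine Prod.ext (hHM p.1 q.1 r.1 s.1) ?_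
  simp only [semidirectMul, Prod.snd_add, map_add, hR, hS]
  abel

theorem isFManifold_semidirect (hA : IsFManifold (mA · ·) (brA · ·))
    (hρ : ∀ x y v, ρ (brA x y) v = ρ x (ρ y v) - ρ y (ρ x v))
    (hμ : ∀ x y v, μ (mA x y) v = μ x (μ y v))
    (hR : ∀ x y z v, repR brA ρ μ (mA x y) z v =
      μ x (repR brA ρ μ y z v) + μ y (repR brA ρ μ x z v))
    (hS : ∀ x y z v, μ (P (mA · ·) (brA · ·) x y z) v =
      repS mA ρ μ y z (μ x v) - μ x (repS mA ρ μ y z v)) :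
    IsFManifold (semidirectMul mA μ) (semidirectBracket brA ρ) := by
  obtain ⟨hc, ha, hanti, hjac, hHM⟩ := hA
  exact ⟨semidirectMul_comm mA μ hc, semidirectMul_assoc mA μ hc ha hμ,
    semidirectBracket_antisymm brA ρ hanti, semidirectBracket_jacobi brA ρ hjac hρ,
    semidirect_hertlingManin mA brA ρ μ hHM hR hS⟩

end FMan

open FMan

theorem semidirectProduct_FManifold_general
    {K A V : Type*} [Field K]
    [AddCommGroup A] [Module K A] [AddCommGroup V] [Module K V]
    (mA brA : A →ₗ[K] A →ₗ[K] A) (ρ μ : A →ₗ[K] V →ₗ[K] V)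
    (hA : IsFManifold (fun x y => mA x y) (fun x y => brA x y))
    (hρ : ∀ (x y : A) (v : V), ρ (brA x y) v = ρ x (ρ y v) - ρ y (ρ x v))
    (hμ : ∀ (x y : A) (v : V), μ (mA x y) v = μ x (μ y v))
    (hR : ∀ (x y z : A) (v : V),
      (let R : A → A → V → V := fun a b u => ρ a (μ b u) - μ b (ρ a u) - μ (brA a b) u
       R (mA x y) z v) =
      (let R : A → A → V → V := fun a b u => ρ a (μ b u) - μ b (ρ a u) - μ (brA a b) u
       μ x (R y z v) + μ y (R x z v)))
    (hS : ∀ (x y z : A) (v : V),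
      μ (P (fun a b => mA a b) (fun a b => brA a b) x y z) v =
      (let S : A → A → V → V := fun a b u => μ a (ρ b u) + μ b (ρ a u) - ρ (mA a b) u
       S y z (μ x v) - μ x (S y z v))) :
    IsFManifold (A := A × V)
      (fun p q => (mA p.1 q.1, μ p.1 q.2 + μ q.1 p.2))
      (fun p q => (brA p.1 q.1, ρ p.1 q.2 - ρ q.1 p.2)) :=
  isFManifold_semidirect mA brA ρ μ hA hρ hμ hR hS

/-- The semidirect product of an F-manifold algebra with a representation is an
F-manifold algebra. -/
theorem semidirectProduct_FManifold
    {K A V : Type*} [Field K] [CharZero K]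
    [AddCommGroup A] [Module K A] [AddCommGroup V] [Module K V]
    (mA brA : A →ₗ[K] A →ₗ[K] A) (ρ μ : A →ₗ[K] V →ₗ[K] V)
    (hA : IsFManifold (fun x y => mA x y) (fun x y => brA x y))
    (hρ : ∀ (x y : A) (v : V), ρ (brA x y) v = ρ x (ρ y v) - ρ y (ρ x v))
    (hμ : ∀ (x y : A) (v : V), μ (mA x y) v = μ x (μ y v))
    (hR : ∀ (x y z : A) (v : V),
      (let R : A → A → V → V := fun a b u => ρ a (μ b u) - μ b (ρ a u) - μ (brA a b) u
       R (mA x y) z v) =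
      (let R : A → A → V → V := fun a b u => ρ a (μ b u) - μ b (ρ a u) - μ (brA a b) u
       μ x (R y z v) + μ y (R x z v)))
    (hS : ∀ (x y z : A) (v : V),
      μ (P (fun a b => mA a b) (fun a b => brA a b) x y z) v =
      (let S : A → A → V → V := fun a b u => μ a (ρ b u) + μ b (ρ a u) - ρ (mA a b) u
       S y z (μ x v) - μ x (S y z v))) :
    IsFManifold (A := A × V)
      (fun p q => (mA p.1 q.1, μ p.1 q.2 + μ q.1 p.2))
      (fun p q => (brA p.1 q.1, ρ p.1 q.2 - ρ q.1 p.2)) :=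
  semidirectProduct_FManifold_general mA brA ρ μ hA hρ hμ hR hS
end

section
/- Let $(A,\cdot_A,[-,-]_A)$ be an F-manifold algebra admitting a nondegenerate symmetric bilinear form $\mathfrak{B}$ invariant in the sense that $\mathfrak{B}(x\cdot_A y, z) = \mathfrak{B}(x, y\cdot_A z)$ and $\mathfrak{B}([x,y]_A, z) = \mathfrak{B}(x,[y,z]_A)$ for all $x,y,z$. Then $A$ is a coherence F-manifold algebra, i.e., $P_{x\cdot_A y}(z,w) = P_y(z, x\cdot_A w) + P_x(z, y\cdot_A w)$ and $P_x(y,z)\cdot_A w = x\cdot_A Q(y,z,w) - Q(y,z,x\cdot_A w)$ hold, where $Q(x,y,z) = [x\cdot_A y, z]_A + [y\cdot_A z, x]_A + [z\cdot_A x, y]_A$. -/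
open FMan

/-!
With respect to an invariant form `B`, every Hertling–Manin operator `P_x` is self-adjoint in its
last argument, `B(P_x(y,z), w) = B(z, P_x(y,w))`, and `Q` is related to `P` by
`B(Q(y,z,w), t) = B(z, P_t(y,w))`. Pairing both coherence identities with an arbitrary `t` and
moving all products and brackets across `B` turns the first into the Hertling–Manin relation and the
second into the first; nondegeneracy of `B` then gives the identities themselves.
-/

namespace FMan

def Q {A : Type*} [AddCommGroup A] (mul br : A → A → A) (x y z : A) : A :=
  br (mul x y) z + br (mul y z) x + br (mul z x) y

section InvariantForm

variable {K A : Type*} [CommRing K] [AddCommGroup A] [Module K A]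
  {mul br : A →ₗ[K] A →ₗ[K] A} {B : A →ₗ[K] A →ₗ[K] K}

theorem form_mul_left_swap (hcomm : ∀ x y, mul x y = mul y x)
    (hinv₁ : ∀ x y z, B (mul x y) z = B x (mul y z)) (u v c : A) :
    B (mul u v) c = B v (mul u c) := by
  rw [hcomm, hinv₁]

theorem form_br_left_swap (hskew : ∀ x y, br x y = - br y x)
    (hinv₂ : ∀ x y z, B (br x y) z = B x (br y z)) (u v c : A) :
    B (br u v) c = - B v (br u c) := by
  rw [hskew, map_neg, LinearMap.neg_apply, hinv₂]

variable (hcomm : ∀ x y, mul x y = mul y x) (hskew : ∀ x y, br x y = - br y x)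
  (hinv₁ : ∀ x y z, B (mul x y) z = B x (mul y z))
  (hinv₂ : ∀ x y z, B (br x y) z = B x (br y z))
include hcomm hskew hinv₁ hinv₂

theorem form_P_swap (x y z w : A) :
    B (P (mul · ·) (br · ·) x y z) w = B z (P (mul · ·) (br · ·) x y w) := by
  have hm := form_mul_left_swap hcomm hinv₁
  have hb := form_br_left_swap hskew hinv₂
  simp only [P, map_sub, LinearMap.sub_apply]
  rw [hb x (mul y z) w, hm y z, hm (br x y) z w, hm y (br x z) w, hb x z (mul y w)]
  ring

theorem form_Q_eq_form_P (y z w t : A) :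
    B (Q (mul · ·) (br · ·) y z w) t = B z (P (mul · ·) (br · ·) t y w) := by
  have hm := form_mul_left_swap hcomm hinv₁
  simp only [Q, P, map_add, map_sub, LinearMap.add_apply]
  rw [hinv₂ (mul y z) w t, hm y z, hinv₂ (mul z w) y t, hcomm z w, hm w z,
    form_br_left_swap hskew hinv₂ (mul w y) z t, hcomm w y, hskew w t, hskew t y,
    hskew t (mul y w)]
  simp only [map_neg, LinearMap.neg_apply]
  rw [hcomm (br y t) w]
  ring

variable (hnondeg : B.SeparatingLeft)
  (hHM : ∀ x y z w, P (mul · ·) (br · ·) (mul x y) z w =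
      mul x (P (mul · ·) (br · ·) y z w) + mul y (P (mul · ·) (br · ·) x z w))
include hnondeg hHM

theorem P_mul_left_eq (x y z w : A) :
    P (mul · ·) (br · ·) (mul x y) z w =
      P (mul · ·) (br · ·) y z (mul x w) + P (mul · ·) (br · ·) x z (mul y w) := by
  have hm := form_mul_left_swap hcomm hinv₁
  have hP := form_P_swap hcomm hskew hinv₁ hinv₂
  refine LinearMap.ker_eq_bot.mp (LinearMap.separatingLeft_iff_ker_eq_bot.mp hnondeg)
    (LinearMap.ext fun t => ?_)
  calc B (P (mul · ·) (br · ·) (mul x y) z w) t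
      = B w (P (mul · ·) (br · ·) (mul x y) z t) := hP _ _ _ _
    _ = B (mul x w) (P (mul · ·) (br · ·) y z t) + B (mul y w) (P (mul · ·) (br · ·) x z t) := by
        rw [hHM, map_add, hm x w, hm y w]
    _ = B (P (mul · ·) (br · ·) y z (mul x w) + P (mul · ·) (br · ·) x z (mul y w)) t := by
        rw [map_add, LinearMap.add_apply, hP y z, hP x z]

theorem mul_P_eq_sub_Q (x y z w : A) :
    mul (P (mul · ·) (br · ·) x y z) w =
      mul x (Q (mul · ·) (br · ·) y z w) - Q (mul · ·) (br · ·) y z (mul x w) := by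
  have hQ := form_Q_eq_form_P hcomm hskew hinv₁ hinv₂
  refine LinearMap.ker_eq_bot.mp (LinearMap.separatingLeft_iff_ker_eq_bot.mp hnondeg)
    (LinearMap.ext fun t => ?_)
  calc B (mul (P (mul · ·) (br · ·) x y z) w) t
      = B z (P (mul · ·) (br · ·) x y (mul t w)) := by
        rw [hinv₁, form_P_swap hcomm hskew hinv₁ hinv₂, hcomm w t]
    _ = B z (P (mul · ·) (br · ·) (mul x t) y w) - B z (P (mul · ·) (br · ·) t y (mul x w)) := by
        rw [P_mul_left_eq hcomm hskew hinv₁ hinv₂ hnondeg hHM, map_add]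
        ring
    _ = B (mul x (Q (mul · ·) (br · ·) y z w) - Q (mul · ·) (br · ·) y z (mul x w)) t := by
        rw [← hQ, ← hQ, map_sub, LinearMap.sub_apply, form_mul_left_swap hcomm hinv₁]

end InvariantForm

end FMan

theorem invariant_form_gives_coherence_general
    {K A : Type*} [Field K]
    [AddCommGroup A] [Module K A]
    (mA brA : A →ₗ[K] A →ₗ[K] A)
    (hA : IsFManifold (fun x y => mA x y) (fun x y => brA x y))
    (B : A →ₗ[K] A →ₗ[K] K)
    (hnondeg : ∀ x : A, (∀ y : A, B x y = 0) → x = 0)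
    (hinv₁ : ∀ x y z : A, B (mA x y) z = B x (mA y z))
    (hinv₂ : ∀ x y z : A, B (brA x y) z = B x (brA y z)) :
    (∀ x y z w : A,
      P (fun a b => mA a b) (fun a b => brA a b) (mA x y) z w =
        P (fun a b => mA a b) (fun a b => brA a b) y z (mA x w) +
        P (fun a b => mA a b) (fun a b => brA a b) x z (mA y w)) ∧
    (∀ x y z w : A,
      (let Q : A → A → A → A := fun a b c =>
        brA (mA a b) c + brA (mA b c) a + brA (mA c a) b
       mA (P (fun a b => mA a b) (fun a b => brA a b) x y z) w) =
      (let Q : A → A → A → A := fun a b c =>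
        brA (mA a b) c + brA (mA b c) a + brA (mA c a) b
       mA x (Q y z w) - Q y z (mA x w))) := by
  obtain ⟨hcomm, -, hskew, -, hHM⟩ := hA
  exact ⟨P_mul_left_eq hcomm hskew hinv₁ hinv₂ hnondeg hHM,
    mul_P_eq_sub_Q hcomm hskew hinv₁ hinv₂ hnondeg hHM⟩

/-- An F-manifold algebra with an invariant nondegenerate symmetric bilinear form is a
coherence F-manifold algebra. -/
theorem invariant_form_gives_coherence
    {K A : Type*} [Field K] [CharZero K] [IsAlgClosed K]
    [AddCommGroup A] [Module K A] [FiniteDimensional K A]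
    (mA brA : A →ₗ[K] A →ₗ[K] A)
    (hA : IsFManifold (fun x y => mA x y) (fun x y => brA x y))
    (B : A →ₗ[K] A →ₗ[K] K)
    (hsymm : ∀ x y : A, B x y = B y x)
    (hnondeg : ∀ x : A, (∀ y : A, B x y = 0) → x = 0)
    (hinv₁ : ∀ x y z : A, B (mA x y) z = B x (mA y z))
    (hinv₂ : ∀ x y z : A, B (brA x y) z = B x (brA y z)) :
    (∀ x y z w : A,
      P (fun a b => mA a b) (fun a b => brA a b) (mA x y) z w =
        P (fun a b => mA a b) (fun a b => brA a b) y z (mA x w) +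
        P (fun a b => mA a b) (fun a b => brA a b) x z (mA y w)) ∧
    (∀ x y z w : A,
      (let Q : A → A → A → A := fun a b c =>
        brA (mA a b) c + brA (mA b c) a + brA (mA c a) b
       mA (P (fun a b => mA a b) (fun a b => brA a b) x y z) w) =
      (let Q : A → A → A → A := fun a b c =>
        brA (mA a b) c + brA (mA b c) a + brA (mA c a) b
       mA x (Q y z w) - Q y z (mA x w))) :=
  invariant_form_gives_coherence_general mA brA hA B hnondeg hinv₁ hinv₂
end

section
/- Let $(A,\cdot_A,[-,-]_A)$ be an F-manifold algebra and $\mathcal{B}:A\to A$ a Rota-Baxter operator (of weight zero) on $A$, i.e. $\mathcal{B}(x)\cdot_A\mathcal{B}(y) = \mathcal{B}(\mathcal{B}(x)\cdot_A y + x\cdot_A\mathcal{B}(y))$ and $[\mathcal{B}(x),\mathcal{B}(y)]_A = \mathcal{B}([\mathcal{B}(x),y]_A + [x,\mathcal{B}(y)]_A)$. Then $x\diamond y = \mathcal{B}(x)\cdot_A y$ and $x\ast y = [\mathcal{B}(x), y]_A$ define a pre-F-manifold algebra structure on $A$. -/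
namespace FMan

variable {R A : Type*} [CommSemiring R] [AddCommGroup A] [Module R A]

def IsRotaBaxter (μ : A →ₗ[R] A →ₗ[R] A) (B : A →ₗ[R] A) : Prop :=
  ∀ x y, μ (B x) (B y) = B (μ (B x) y + μ x (B y))

variable {m br : A →ₗ[R] A →ₗ[R] A} {B : A →ₗ[R] A}

theorem IsRotaBaxter.map_add_swap (hB : IsRotaBaxter m B) (hc : ∀ x y, m x y = m y x)
    (x y : A) : B (m (B x) y + m (B y) x) = m (B x) (B y) := by
  rw [hc (B y) x, hB]

theorem IsRotaBaxter.map_sub_swap (hB : IsRotaBaxter br B) (hskew : ∀ x y, br x y = -br y x)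
    (x y : A) : B (br (B x) y - br (B y) x) = br (B x) (B y) := by
  rw [hskew (B y) x, sub_neg_eq_add, hB]

theorem bracket_bracket_of_jacobi (hskew : ∀ x y, br x y = -br y x)
    (hjac : ∀ x y z, br x (br y z) + br y (br z x) + br z (br x y) = 0) (x y z : A) :
    br (br x y) z = br x (br y z) - br y (br x z) := by
  have h := hjac x y z
  rw [hskew z (br x y), hskew z x, map_neg] at h
  linear_combination (norm := abel) -h

theorem isZinbiel_of_isRotaBaxter (hB : IsRotaBaxter m B) (hc : ∀ x y, m x y = m y x)
    (ha : ∀ x y z, m (m x y) z = m x (m y z)) (x y z : A) :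
    m (B x) (m (B y) z) = m (B (m (B y) x)) z + m (B (m (B x) y)) z := by
  calc m (B x) (m (B y) z) = m (m (B x) (B y)) z := (ha _ _ _).symm
    _ = m (B (m (B x) y + m (B y) x)) z := by rw [hB.map_add_swap hc]
    _ = _ := by rw [map_add, map_add, LinearMap.add_apply, add_comm]

theorem isPreLie_of_isRotaBaxter (hB : IsRotaBaxter br B) (hskew : ∀ x y, br x y = -br y x)
    (hjac : ∀ x y z, br x (br y z) + br y (br z x) + br z (br x y) = 0) (x y z : A) :
    br (B (br (B x) y)) z - br (B x) (br (B y) z)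
      = br (B (br (B y) x)) z - br (B y) (br (B x) z) := by
  have h : br (B (br (B x) y)) z - br (B (br (B y) x)) z = br (br (B x) (B y)) z := by
    rw [← hB.map_sub_swap hskew, map_sub, map_sub, LinearMap.sub_apply]
  rw [bracket_bracket_of_jacobi hskew hjac] at h
  linear_combination (norm := abel) h

theorem P_comm (hc : ∀ x y, m x y = m y x) (x y z : A) :
    P (fun x y => m x y) (fun x y => br x y) x y z
      = P (fun x y => m x y) (fun x y => br x y) x z y := by
  simp only [P]
  rw [hc y z, hc (br x y) z, hc y (br x z)]
  abel

theorem F1_eq_P (hB : IsRotaBaxter br B) (hskew : ∀ x y, br x y = -br y x) (x y z : A) :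
    F1 (fun x y => m (B x) y) (fun x y => br (B x) y) x y z
      = P (fun x y => m x y) (fun x y => br x y) (B x) (B y) z := by
  simp only [F1, P]
  rw [hB.map_sub_swap hskew]
  abel

theorem F2_eq_P (hB : IsRotaBaxter m B) (hc : ∀ x y, m x y = m y x)
    (hskew : ∀ x y, br x y = -br y x) (x y z : A) :
    F2 (fun x y => m (B x) y) (fun x y => br (B x) y) x y z
      = P (fun x y => m x y) (fun x y => br x y) z (B x) (B y) := by
  simp only [F2, P]
  rw [hB.map_add_swap hc, hskew z, hskew z (B x), hskew z (B y), map_neg, LinearMap.neg_apply,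
    map_neg, hc (B y)]
  abel

theorem P_apply_map_eq_map (hm : IsRotaBaxter m B) (hbr : IsRotaBaxter br B) (x y z : A) :
    P (fun x y => m x y) (fun x y => br x y) (B x) (B y) (B z)
      = B (P (fun x y => m x y) (fun x y => br x y) (B x) (B y) z
          + P (fun x y => m x y) (fun x y => br x y) (B x) y (B z)
          + P (fun x y => m x y) (fun x y => br x y) x (B y) (B z)) := by
  have h₁ : br (B x) (m (B y) (B z))
      = B (br (B x) (m (B y) z + m y (B z)) + br x (m (B y) (B z))) := by
    rw [hm y z, hbr]
  have h₂ : m (br (B x) (B y)) (B z)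
      = B (m (br (B x) (B y)) z + m (br (B x) y + br x (B y)) (B z)) := by
    rw [hbr x y, hm, ← hbr x y]
  have h₃ : m (B y) (br (B x) (B z))
      = B (m (B y) (br (B x) z + br x (B z)) + m y (br (B x) (B z))) := by
    rw [hbr x z, hm, ← hbr x z]
  simp only [P]
  rw [h₁, h₂, h₃]
  simp only [map_add, map_sub, LinearMap.add_apply]
  abel

end FMan

open FMan

theorem rotaBaxter_gives_preFManifold_general
    {K A : Type*} [Field K] [AddCommGroup A] [Module K A]
    (mA brA : A →ₗ[K] A →ₗ[K] A)
    (hA : IsFManifold (fun x y => mA x y) (fun x y => brA x y))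
    (B : A →ₗ[K] A)
    (hB₁ : ∀ x y : A, mA (B x) (B y) = B (mA (B x) y + mA x (B y)))
    (hB₂ : ∀ x y : A, brA (B x) (B y) = B (brA (B x) y + brA x (B y))) :
    IsPreFManifold (fun x y => mA (B x) y) (fun x y => brA (B x) y) := by
  obtain ⟨hc, ha, hskew, hjac, hHM⟩ := hA
  have hm : IsRotaBaxter mA B := hB₁
  have hbr : IsRotaBaxter brA B := hB₂
  refine ⟨isZinbiel_of_isRotaBaxter hm hc ha, isPreLie_of_isRotaBaxter hbr hskew hjac, ?_, ?_⟩
  · intro x y z w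
    simp only [F1_eq_P hbr hskew, hm.map_add_swap hc]
    exact hHM (B x) (B y) (B z) w
  · intro x y z w
    simp only [F1_eq_P hbr hskew, F2_eq_P hm hc hskew, P_comm hc (B x) (B z) y,
      ← P_apply_map_eq_map hm hbr]
    rw [hHM, add_sub_cancel_left, hc]

/-- A Rota-Baxter operator (of weight zero) on an F-manifold algebra induces a
pre-F-manifold algebra structure via `x ⋄ y = B(x)·y` and `x ∗ y = [B(x), y]`. -/
theorem rotaBaxter_gives_preFManifold
    {K A : Type*} [Field K] [CharZero K] [AddCommGroup A] [Module K A]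
    (mA brA : A →ₗ[K] A →ₗ[K] A)
    (hA : IsFManifold (fun x y => mA x y) (fun x y => brA x y))
    (B : A →ₗ[K] A)
    (hB₁ : ∀ x y : A, mA (B x) (B y) = B (mA (B x) y + mA x (B y)))
    (hB₂ : ∀ x y : A, brA (B x) (B y) = B (brA (B x) y + brA x (B y))) :
    IsPreFManifold (fun x y => mA (B x) y) (fun x y => brA (B x) y) :=
  rotaBaxter_gives_preFManifold_general mA brA hA B hB₁ hB₂
end

section
/- Let $(A,\cdot)$ be a commutative associative algebra with a Rota-Baxter operator $\mathcal{B}$ (i.e. $\mathcal{B}(x)\cdot\mathcal{B}(y)=\mathcal{B}(\mathcal{B}(x)\cdot y + x\cdot\mathcal{B}(y))$) and a derivation $D$ with $\mathcal{B}\circ D = D\circ\mathcal{B}$. Then $\mathcal{B}$ is a Rota-Baxter operator on the Lie algebra $(A,[-,-])$ with $[x,y] = x\cdot D(y) - y\cdot D(x)$, i.e. $[\mathcal{B}(x),\mathcal{B}(y)] = \mathcal{B}([\mathcal{B}(x),y] + [x,\mathcal{B}(y)])$. -/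
/-!
The bracket is the antisymmetrization of `(a, b) ↦ a · D b`. Since `B` commutes with `D`, the
Rota-Baxter identity for `·` at `(x, D y)` is the one for `(a, b) ↦ a · D b` at `(x, y)`; and
since `B` is additive, antisymmetrizing an operation preserves the Rota-Baxter identity.
-/

def IsRotaBaxter {A : Type*} [Add A] (mul : A → A → A) (B : A → A) : Prop :=
  ∀ x y, mul (B x) (B y) = B (mul (B x) y + mul x (B y))

namespace IsRotaBaxter

variable {A : Type*}

theorem comp_right_of_commute [Add A] {mul : A → A → A} {B : A → A} (hB : IsRotaBaxter mul B)
    {D : A → A} (hBD : ∀ x, B (D x) = D (B x)) : IsRotaBaxter (fun a b => mul a (D b)) B := by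
  intro x y
  simp only [← hBD, hB x (D y)]

theorem antisymm [AddCommGroup A] {F : Type*} [FunLike F A A] [AddMonoidHomClass F A A]
    {mul : A → A → A} {B : F} (hB : IsRotaBaxter mul B) :
    IsRotaBaxter (fun a b => mul a b - mul b a) B := by
  intro x y
  beta_reduce
  rw [hB x y, hB y x, ← map_sub]
  congr 1
  abel

end IsRotaBaxter

theorem rotaBaxter_commuting_with_derivation_general
    {K A : Type*} [Field K] [AddCommGroup A] [Module K A]
    (m : A →ₗ[K] A →ₗ[K] A) (D B : A →ₗ[K] A)
    (hB : ∀ x y : A, m (B x) (B y) = B (m (B x) y + m x (B y)))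
    (hBD : ∀ x : A, B (D x) = D (B x)) :
    ∀ x y : A,
      (let br : A → A → A := fun a b => m a (D b) - m b (D a)
       br (B x) (B y)) =
      (let br : A → A → A := fun a b => m a (D b) - m b (D a)
       B (br (B x) y + br x (B y))) :=
  (IsRotaBaxter.comp_right_of_commute (mul := fun a b => m a b) hB hBD).antisymm

/-- A Rota-Baxter operator on a commutative associative algebra commuting with a
derivation `D` is a Rota-Baxter operator on the Lie algebra with bracket
`[x,y] = x·D(y) - y·D(x)`. -/
theorem rotaBaxter_commuting_with_derivation
    {K A : Type*} [Field K] [CharZero K] [AddCommGroup A] [Module K A]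
    (m : A →ₗ[K] A →ₗ[K] A) (D B : A →ₗ[K] A)
    (hcomm : ∀ x y : A, m x y = m y x)
    (hassoc : ∀ x y z : A, m (m x y) z = m x (m y z))
    (hder : ∀ x y : A, D (m x y) = m (D x) y + m x (D y))
    (hB : ∀ x y : A, m (B x) (B y) = B (m (B x) y + m x (B y)))
    (hBD : ∀ x : A, B (D x) = D (B x)) :
    ∀ x y : A,
      (let br : A → A → A := fun a b => m a (D b) - m b (D a)
       br (B x) (B y)) =
      (let br : A → A → A := fun a b => m a (D b) - m b (D a)
       B (br (B x) y + br x (B y))) :=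
  rotaBaxter_commuting_with_derivation_general m D B hB hBD
end

section
/- Let $(A,\cdot_A,[-,-]_A)$ be an F-manifold algebra and $\alpha:A\to A$ an average operator on $A$, i.e. $\alpha(x)\cdot_A\alpha(y) = \alpha(\alpha(x)\cdot_A y)$ and $[\alpha(x),\alpha(y)]_A = \alpha([\alpha(x),y]_A)$. Then $x\bullet y = \alpha(x)\cdot_A y$ and $\{x,y\} = [\alpha(x), y]_A$ define a dual pre-F-manifold algebra structure on $A$. -/
open FMan

/-!
An average operator can be moved across products and brackets of `α`-images:
`α x · α y = α (α x · y)` and `[α x, α y] = α [α x, y]`. Hence every axiom of the induced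
structure, once written out, is an axiom of `A` evaluated at `α`-images. The two compatibility
operators become Hertling–Manin operators of `A`, namely `G₁(x,y,z) = P_{α x}(α y, z)` and
`G₂(x,y,z) = -P_x(α y, α z)`, and `α` commutes with `P_{α x}(α y, -)`, so the compatibility
conditions follow from the Hertling–Manin relation, while permutativity, the Leibniz identity
and the symmetry condition follow from commutativity, associativity, antisymmetry and Jacobi.
-/

namespace FMan

def IsAverageOperator {A : Type*} (mul : A → A → A) (α : A → A) : Prop :=
  ∀ x y, mul (α x) (α y) = α (mul (α x) y)

def inducedOp {A : Type*} (op : A → A → A) (α : A → A) : A → A → A :=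
  fun x y => op (α x) y

theorem leibniz_of_jacobi {R A : Type*} [CommSemiring R] [AddCommGroup A] [Module R A]
    {br : A →ₗ[R] A →ₗ[R] A} (hanti : ∀ x y, br x y = - br y x)
    (hjacobi : ∀ x y z, br x (br y z) + br y (br z x) + br z (br x y) = 0) (x y z : A) :
    br x (br y z) = br (br x y) z + br y (br x z) := by
  have h := hjacobi x y z
  rw [hanti z x, map_neg, hanti z (br x y)] at h
  rw [← sub_eq_zero, ← h]
  abel

namespace IsAverageOperator

section Magma

variable {A : Type*} {mul : A → A → A} {α : A → A}

theorem inducedOp_assoc (hα : IsAverageOperator mul α)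
    (hassoc : ∀ x y z, mul (mul x y) z = mul x (mul y z)) (x y z : A) :
    inducedOp mul α x (inducedOp mul α y z) =
      inducedOp mul α (inducedOp mul α x y) z := by
  simp only [inducedOp]
  rw [← hα, hassoc]

theorem inducedOp_swap_left (hα : IsAverageOperator mul α)
    (hcomm : ∀ x y, mul x y = mul y x) (x y z : A) :
    inducedOp mul α (inducedOp mul α x y) z = inducedOp mul α (inducedOp mul α y x) z := by
  simp only [inducedOp]
  rw [← hα, ← hα, hcomm (α x)]

end Magma

section Group

variable {A : Type*} [AddCommGroup A] {mul br : A → A → A} {α : A → A}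

theorem G1_inducedOp (hbr : IsAverageOperator br α) (x y z : A) :
    G1 (inducedOp mul α) (inducedOp br α) x y z = P mul br (α x) (α y) z := by
  simp only [G1, P, inducedOp]
  rw [hbr]

theorem G1_inducedOp_inducedOp_left (hmul : IsAverageOperator mul α)
    (hbr : IsAverageOperator br α)
    (hHM : ∀ x y z w, P mul br (mul x y) z w = mul x (P mul br y z w) + mul y (P mul br x z w))
    (x y z w : A) :
    G1 (inducedOp mul α) (inducedOp br α) (inducedOp mul α x y) z w =
      inducedOp mul α x (G1 (inducedOp mul α) (inducedOp br α) y z w) +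
        inducedOp mul α y (G1 (inducedOp mul α) (inducedOp br α) x z w) := by
  simp only [G1_inducedOp hbr, inducedOp]
  rw [← hmul]
  exact hHM (α x) (α y) (α z) w

end Group

section Bilinear

variable {R A : Type*} [CommSemiring R] [AddCommGroup A] [Module R A]
  {mul br : A →ₗ[R] A →ₗ[R] A} {α : A →ₗ[R] A}

theorem inducedOp_leibniz (hbr : IsAverageOperator (br · ·) α)
    (hanti : ∀ x y, br x y = - br y x)
    (hjacobi : ∀ x y z, br x (br y z) + br y (br z x) + br z (br x y) = 0) (x y z : A) :
    inducedOp (br · ·) α x (inducedOp (br · ·) α y z) =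
      inducedOp (br · ·) α (inducedOp (br · ·) α x y) z +
        inducedOp (br · ·) α y (inducedOp (br · ·) α x z) := by
  dsimp only [IsAverageOperator, inducedOp] at hbr ⊢
  rw [← hbr x y]
  exact leibniz_of_jacobi hanti hjacobi _ _ _

theorem inducedOp_inducedOp_symm_left (hbr : IsAverageOperator (br · ·) α)
    (hanti : ∀ x y, br x y = - br y x) (x y z : A) :
    inducedOp (mul · ·) α (inducedOp (br · ·) α x y) z +
      inducedOp (mul · ·) α (inducedOp (br · ·) α y x) z = 0 := by
  dsimp only [IsAverageOperator, inducedOp] at hbr ⊢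
  rw [← hbr x y, ← hbr y x, hanti (α y), map_neg, LinearMap.neg_apply, add_neg_cancel]

theorem map_P (hmul : IsAverageOperator (mul · ·) α) (hbr : IsAverageOperator (br · ·) α)
    (x y z : A) :
    α (P (mul · ·) (br · ·) (α x) (α y) z) = P (mul · ·) (br · ·) (α x) (α y) (α z) := by
  dsimp only [IsAverageOperator, P] at hmul hbr ⊢
  simp only [map_sub]
  rw [← hbr x (mul (α y) z), ← hmul y z, hbr x y, ← hmul (br (α x) y) z, ← hbr x y,
    ← hmul y (br (α x) z), ← hbr x z]

theorem G2_inducedOp (hmul : IsAverageOperator (mul · ·) α)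
    (hcomm : ∀ x y, mul x y = mul y x) (hanti : ∀ x y, br x y = - br y x) (x y z : A) :
    G2 (inducedOp (mul · ·) α) (inducedOp (br · ·) α) x y z =
      - P (mul · ·) (br · ·) x (α y) (α z) := by
  dsimp only [IsAverageOperator, G2, P, inducedOp] at hmul ⊢
  rw [← hmul y z, hanti (mul (α y) (α z)) x, hanti (α y) x, hanti (α z) x, map_neg, map_neg,
    hcomm (α z) (br x (α y))]
  abel

theorem G2_inducedOp_inducedOp_left (hmul : IsAverageOperator (mul · ·) α)
    (hbr : IsAverageOperator (br · ·) α)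
    (hcomm : ∀ x y, mul x y = mul y x) (hanti : ∀ x y, br x y = - br y x)
    (hHM : ∀ x y z w, P (mul · ·) (br · ·) (mul x y) z w =
      mul x (P (mul · ·) (br · ·) y z w) + mul y (P (mul · ·) (br · ·) x z w))
    (x y z w : A) :
    G2 (inducedOp (mul · ·) α) (inducedOp (br · ·) α) (inducedOp (mul · ·) α y x) z w =
      inducedOp (mul · ·) α y (G2 (inducedOp (mul · ·) α) (inducedOp (br · ·) α) x z w) -
        inducedOp (mul · ·) α (G1 (inducedOp (mul · ·) α) (inducedOp (br · ·) α) y z w) x := by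
  simp only [G2_inducedOp hmul hcomm hanti, G1_inducedOp hbr, inducedOp]
  rw [map_P hmul hbr, hHM, map_neg, hcomm x]
  abel

end Bilinear

end IsAverageOperator

end FMan

theorem averageOperator_gives_dualPreFManifold_general
    {K A : Type*} [Field K] [AddCommGroup A] [Module K A]
    (mA brA : A →ₗ[K] A →ₗ[K] A)
    (hA : IsFManifold (fun x y => mA x y) (fun x y => brA x y))
    (α : A →ₗ[K] A)
    (hα₁ : ∀ x y : A, mA (α x) (α y) = α (mA (α x) y))
    (hα₂ : ∀ x y : A, brA (α x) (α y) = α (brA (α x) y)) :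
    IsDualPreFManifold (fun x y => mA (α x) y) (fun x y => brA (α x) y) := by
  obtain ⟨hcomm, hassoc, hanti, hjacobi, hHM⟩ := hA
  have hmul : IsAverageOperator (fun x y => mA x y) α := hα₁
  have hbr : IsAverageOperator (fun x y => brA x y) α := hα₂
  exact ⟨hmul.inducedOp_assoc hassoc, hmul.inducedOp_swap_left hcomm,
    hbr.inducedOp_leibniz hanti hjacobi, hmul.G1_inducedOp_inducedOp_left hbr hHM,
    hmul.G2_inducedOp_inducedOp_left hbr hcomm hanti hHM, hbr.inducedOp_inducedOp_symm_left hanti⟩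

/-- An average operator on an F-manifold algebra induces a dual pre-F-manifold
algebra structure via `x • y = α(x)·y` and `{x,y} = [α(x), y]`. -/
theorem averageOperator_gives_dualPreFManifold
    {K A : Type*} [Field K] [CharZero K] [AddCommGroup A] [Module K A]
    (mA brA : A →ₗ[K] A →ₗ[K] A)
    (hA : IsFManifold (fun x y => mA x y) (fun x y => brA x y))
    (α : A →ₗ[K] A)
    (hα₁ : ∀ x y : A, mA (α x) (α y) = α (mA (α x) y))
    (hα₂ : ∀ x y : A, brA (α x) (α y) = α (brA (α x) y)) :
    IsDualPreFManifold (fun x y => mA (α x) y) (fun x y => brA (α x) y) :=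
  averageOperator_gives_dualPreFManifold_general mA brA hA α hα₁ hα₂
end
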